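/- arXiv:1310.2276 — 2 statements merged into one kernel-verified Lean document; each statement's English description precedes it below -/
import Mathlib

section
/- For every integer m, the rational function 𝒫_m := 𝒰_m'/𝒰_m satisfies the inhomogeneous Painlevé-II equation with parameter m, namely 𝒫_m'' = 2·𝒫_m³ + (2/3)·y·𝒫_m − (2/3)·m, and the rational function 𝒬_m := 𝒱_m'/𝒱_m satisfies 𝒬_m'' = 2·𝒬_m³ + (2/3)·y·𝒬_m + (2/3)·(m−1), both as identities in ℂ(y). -/
/-!
The recursion is a ladder of Bäcklund transformations for Painlevé II, and the whole argument
takes place in an arbitrary differential field of characteristic zero with an element `y`,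
`y' = 1`. If `p'' = 2p³ + (2/3)yp − (2/3)a` with `a' = 0`, put `t = (p' − p²)/2 − y/6`. Then
`t' + 2pt = −(2a + 1)/6`, so `t ≠ 0` as soon as `2a + 1 ≠ 0`, and `p + t'/t` solves the equation
with parameter `a + 1`. Since `𝒰_{n+1} = 𝒰_n · t(𝒫_n)`, the logarithmic derivatives climb this
ladder from `𝒫_0 = 0`, and every `𝒰_n` is nonzero. For negative indices `𝒰_{−n} = 1/𝒰_n` and
`𝒱_m = 1/𝒰_{m−1}`, and `p ↦ −p` turns parameter `a` into `−a`.
-/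

/-- The derivative on the field `ℂ(y)` of complex rational functions, computed via the
quotient rule applied to the lowest-terms representation `num/denom`. -/
noncomputable def rfD (f : RatFunc ℂ) : RatFunc ℂ :=
  (algebraMap (Polynomial ℂ) (RatFunc ℂ) (Polynomial.derivative f.num) *
      algebraMap (Polynomial ℂ) (RatFunc ℂ) f.denom -
    algebraMap (Polynomial ℂ) (RatFunc ℂ) f.num *
      algebraMap (Polynomial ℂ) (RatFunc ℂ) (Polynomial.derivative f.denom)) /
    algebraMap (Polynomial ℂ) (RatFunc ℂ) f.denom ^ 2

/-- The pairs `(𝒰_m, 𝒱_m)` for `m = 0, 1, 2, …` via the forward recursion. -/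
noncomputable def UVpos : ℕ → RatFunc ℂ × RatFunc ℂ
  | 0 => (1, -RatFunc.X / 6)
  | n + 1 =>
    (-(1 / 6 : RatFunc ℂ) * RatFunc.X * (UVpos n).1 - rfD (UVpos n).1 ^ 2 / (UVpos n).1 +
        (1 / 2 : RatFunc ℂ) * rfD (rfD (UVpos n).1),
      1 / (UVpos n).1)

/-- The pairs `(𝒰_{-m}, 𝒱_{-m})` for `m = 0, 1, 2, …` via the backward recursion. -/
noncomputable def UVneg : ℕ → RatFunc ℂ × RatFunc ℂ
  | 0 => (1, -RatFunc.X / 6)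
  | n + 1 =>
    (1 / (UVneg n).2,
      (1 / 2 : RatFunc ℂ) * rfD (rfD (UVneg n).2) - rfD (UVneg n).2 ^ 2 / (UVneg n).2 -
        (1 / 6 : RatFunc ℂ) * RatFunc.X * (UVneg n).2)

/-- The rational function `𝒰_m ∈ ℂ(y)`, `m ∈ ℤ`. -/
noncomputable def 𝒰 (m : ℤ) : RatFunc ℂ :=
  if 0 ≤ m then (UVpos m.toNat).1 else (UVneg (-m).toNat).1

/-- The rational function `𝒱_m ∈ ℂ(y)`, `m ∈ ℤ`. -/
noncomputable def 𝒱 (m : ℤ) : RatFunc ℂ :=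
  if 0 ≤ m then (UVpos m.toNat).2 else (UVneg (-m).toNat).2


/-- The rational function `𝒫_m := 𝒰_m'/𝒰_m ∈ ℂ(y)`. -/
noncomputable def Pm (m : ℤ) : RatFunc ℂ := rfD (𝒰 m) / 𝒰 m

/-- The rational function `𝒬_m := 𝒱_m'/𝒱_m ∈ ℂ(y)`. -/
noncomputable def Qm (m : ℤ) : RatFunc ℂ := rfD (𝒱 m) / 𝒱 m

namespace Derivation

section CommRing

variable {R A : Type*} [CommRing R] [CommRing A] [Algebra R A] (D : Derivation R A A)

theorem map_ofNat (n : ℕ) [n.AtLeastTwo] : D (OfNat.ofNat n : A) = 0 := by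
  exact_mod_cast D.map_natCast n

theorem map_ofNat_mul (n : ℕ) [n.AtLeastTwo] (a : A) :
    D (OfNat.ofNat n * a) = OfNat.ofNat n * D a := by
  rw [leibniz, map_ofNat, smul_eq_mul, smul_zero, add_zero]

theorem map_sq (a : A) : D (a ^ 2) = 2 * a * D a := by
  rw [sq, leibniz, smul_eq_mul]; ring

end CommRing

section Field

variable {R K : Type*} [CommRing R] [Field K] [Algebra R K] (D : Derivation R K K)

theorem map_div_ofNat (n : ℕ) [n.AtLeastTwo] (a : K) :
    D (a / OfNat.ofNat n) = D a / OfNat.ofNat n := by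
  rw [D.leibniz_div_const _ _ (D.map_ofNat n), smul_eq_mul, inv_mul_eq_div]

theorem map_inv_div_inv (a : K) : D a⁻¹ / a⁻¹ = -(D a / a) := by
  rcases eq_or_ne a 0 with rfl | ha
  · simp
  · rw [leibniz_inv, smul_eq_mul]; field_simp

theorem map_mul_div_mul {a b : K} (ha : a ≠ 0) (hb : b ≠ 0) :
    D (a * b) / (a * b) = D a / a + D b / b := by
  rw [leibniz, smul_eq_mul, smul_eq_mul]; field_simp; ring

end Field

end Derivation

section PainleveII

variable {R K : Type*} [CommRing R] [Field K] [Algebra R K] (D : Derivation R K K)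

def IsPainleveII (y a p : K) : Prop :=
  D (D p) = 2 * p ^ 3 + 2 / 3 * y * p - 2 / 3 * a

def backlundFactor (y p : K) : K := (D p - p ^ 2) / 2 - y / 6

def backlundStep (y u : K) : K := -(1 / 6) * y * u - D u ^ 2 / u + 1 / 2 * D (D u)

variable {D} {y a p : K}

theorem IsPainleveII.neg (hp : IsPainleveII D y a p) : IsPainleveII D y (-a) (-p) := by
  unfold IsPainleveII at *
  simp only [map_neg, hp]
  ring

variable [CharZero K]

theorem IsPainleveII.map_backlundFactor (hy : D y = 1) (hp : IsPainleveII D y a p) :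
    D (backlundFactor D y p) = -(2 * a + 1) / 6 - 2 * p * backlundFactor D y p := by
  unfold IsPainleveII at hp
  rw [backlundFactor, Derivation.map_sub, Derivation.map_div_ofNat, Derivation.map_div_ofNat,
    Derivation.map_sub, Derivation.map_sq, hp, hy]
  ring

theorem IsPainleveII.backlundFactor_ne_zero (hy : D y = 1) (hp : IsPainleveII D y a p)
    (ha : 2 * a + 1 ≠ 0) : backlundFactor D y p ≠ 0 := by
  intro h
  have := hp.map_backlundFactor hy
  rw [h, map_zero] at this
  exact ha (by linear_combination 6 * this)

theorem IsPainleveII.add_logDeriv_backlundFactor (hy : D y = 1) (ha : D a = 0)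
    (hp : IsPainleveII D y a p) (ht : backlundFactor D y p ≠ 0) :
    IsPainleveII D y (a + 1) (p + D (backlundFactor D y p) / backlundFactor D y p) := by
  have hDt := hp.map_backlundFactor hy
  set t := backlundFactor D y p with ht_def
  have hDp : D p = 2 * t + p ^ 2 + y / 3 := by rw [ht_def, backlundFactor]; ring
  have hDDt : D (D t) = -(2 * D p * t) - 2 * p * D t := by
    nth_rewrite 1 [hDt]
    rw [Derivation.map_sub, Derivation.map_div_ofNat, Derivation.map_neg, Derivation.map_add,
      Derivation.map_ofNat_mul, ha, Derivation.map_one_eq_zero, Derivation.leibniz,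
      Derivation.map_ofNat_mul, smul_eq_mul, smul_eq_mul]
    ring
  -- a Riccati equation for `p + t'/t`; differentiating it once more gives Painlevé II
  have hDq : D (p + D t / t) = -(p + D t / t) ^ 2 - y / 3 - 2 * t := by
    rw [Derivation.map_add, Derivation.leibniz_div, smul_eq_mul, smul_eq_mul, hDDt, hDp]
    field_simp
    rw [hDt]
    ring
  unfold IsPainleveII
  rw [hDq, Derivation.map_sub, Derivation.map_sub, Derivation.map_neg, Derivation.map_sq, hDq,
    Derivation.map_div_ofNat, hy, Derivation.map_ofNat_mul, hDt]
  field_simp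
  ring

theorem backlundStep_eq_mul_backlundFactor {u : K} (hu : u ≠ 0) :
    backlundStep D y u = u * backlundFactor D y (D u / u) := by
  rw [backlundStep, backlundFactor, Derivation.leibniz_div, smul_eq_mul, smul_eq_mul]
  field_simp
  ring

theorem iterate_backlundStep_ne_zero_and_isPainleveII (hy : D y = 1) (n : ℕ) :
    (backlundStep D y)^[n] 1 ≠ 0 ∧
      IsPainleveII D y n (D ((backlundStep D y)^[n] 1) / (backlundStep D y)^[n] 1) := by
  induction n with
  | zero => simp [IsPainleveII]
  | succ n ih =>
    obtain ⟨hu, hp⟩ := ih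
    have ht := hp.backlundFactor_ne_zero hy (by exact_mod_cast (2 * n).succ_ne_zero)
    rw [Function.iterate_succ_apply', backlundStep_eq_mul_backlundFactor hu,
      D.map_mul_div_mul hu ht, Nat.cast_succ]
    exact ⟨mul_ne_zero hu ht, hp.add_logDeriv_backlundFactor hy (D.map_natCast n) ht⟩

end PainleveII

section RationalFunctions

open Polynomial

theorem rfD_div_algebraMap (p q : ℂ[X]) (hq : q ≠ 0) :
    rfD (algebraMap ℂ[X] (RatFunc ℂ) p / algebraMap ℂ[X] (RatFunc ℂ) q) =
      (algebraMap ℂ[X] (RatFunc ℂ) (derivative p) * algebraMap ℂ[X] (RatFunc ℂ) q -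
        algebraMap ℂ[X] (RatFunc ℂ) p * algebraMap ℂ[X] (RatFunc ℂ) (derivative q)) /
        algebraMap ℂ[X] (RatFunc ℂ) q ^ 2 := by
  set A := algebraMap ℂ[X] (RatFunc ℂ)
  set f := A p / A q
  have hd : A f.denom ≠ 0 := RatFunc.algebraMap_ne_zero f.denom_ne_zero
  have hq' : A q ≠ 0 := RatFunc.algebraMap_ne_zero hq
  have hcross : f.num * q = p * f.denom := by
    apply RatFunc.algebraMap_injective ℂ
    rw [map_mul, map_mul, ← div_eq_div_iff hd hq', f.num_div_denom]
  have hcross' := congrArg derivative hcross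
  rw [derivative_mul, derivative_mul] at hcross'
  replace hcross := congrArg A hcross
  replace hcross' := congrArg A hcross'
  simp only [map_mul, map_add] at hcross hcross'
  rw [rfD, div_eq_div_iff (pow_ne_zero 2 hd) (pow_ne_zero 2 hq')]
  linear_combination (A f.denom * A q) * hcross' -
    (A (derivative f.denom) * A q + A (derivative q) * A f.denom) * hcross

theorem rfD_algebraMap (p : ℂ[X]) :
    rfD (algebraMap ℂ[X] (RatFunc ℂ) p) = algebraMap ℂ[X] (RatFunc ℂ) (derivative p) := by
  simpa using rfD_div_algebraMap p 1 one_ne_zero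

theorem rfD_add (f g : RatFunc ℂ) : rfD (f + g) = rfD f + rfD g := by
  have hf := RatFunc.algebraMap_ne_zero f.denom_ne_zero
  have hg := RatFunc.algebraMap_ne_zero g.denom_ne_zero
  have hsum : f + g = algebraMap ℂ[X] (RatFunc ℂ) (f.num * g.denom + f.denom * g.num) /
      algebraMap ℂ[X] (RatFunc ℂ) (f.denom * g.denom) := by
    rw [map_add, map_mul, map_mul, map_mul, ← div_add_div _ _ hf hg, f.num_div_denom,
      g.num_div_denom]
  rw [hsum, rfD_div_algebraMap _ _ (mul_ne_zero f.denom_ne_zero g.denom_ne_zero)]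
  conv_rhs => rw [← f.num_div_denom, ← g.num_div_denom,
    rfD_div_algebraMap _ _ f.denom_ne_zero, rfD_div_algebraMap _ _ g.denom_ne_zero]
  simp only [derivative_mul, map_add, map_mul]
  field_simp
  ring

theorem rfD_mul (f g : RatFunc ℂ) : rfD (f * g) = f * rfD g + g * rfD f := by
  have hf := RatFunc.algebraMap_ne_zero f.denom_ne_zero
  have hg := RatFunc.algebraMap_ne_zero g.denom_ne_zero
  have hprod : f * g = algebraMap ℂ[X] (RatFunc ℂ) (f.num * g.num) /
      algebraMap ℂ[X] (RatFunc ℂ) (f.denom * g.denom) := by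
    rw [map_mul, map_mul, ← div_mul_div_comm, f.num_div_denom, g.num_div_denom]
  rw [hprod, rfD_div_algebraMap _ _ (mul_ne_zero f.denom_ne_zero g.denom_ne_zero)]
  conv_rhs => rw [← f.num_div_denom, ← g.num_div_denom,
    rfD_div_algebraMap _ _ f.denom_ne_zero, rfD_div_algebraMap _ _ g.denom_ne_zero]
  simp only [derivative_mul, map_add, map_mul]
  field_simp
  ring

noncomputable def rfDerivation : Derivation ℂ (RatFunc ℂ) (RatFunc ℂ) :=
  Derivation.mk'
    { toFun := rfD
      map_add' := rfD_add
      map_smul' := fun c f => by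
        have hc : rfD (algebraMap ℂ (RatFunc ℂ) c) = 0 := by
          rw [RatFunc.algebraMap_eq_C, ← RatFunc.algebraMap_C, rfD_algebraMap,
            derivative_C, map_zero]
        rw [RingHom.id_apply, Algebra.smul_def, Algebra.smul_def, rfD_mul, hc, mul_zero,
          add_zero] }
    fun f g => rfD_mul f g

theorem rfDerivation_apply (f : RatFunc ℂ) : rfDerivation f = rfD f := rfl

theorem rfDerivation_X : rfDerivation RatFunc.X = 1 := by
  rw [rfDerivation_apply, ← RatFunc.algebraMap_X, rfD_algebraMap, derivative_X, map_one]

end RationalFunctions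

theorem UVpos_fst (n : ℕ) : (UVpos n).1 = (backlundStep rfDerivation RatFunc.X)^[n] 1 := by
  induction n with
  | zero => rfl
  | succ n ih => rw [Function.iterate_succ_apply', ← ih]; rfl

theorem UVneg_snd (n : ℕ) : (UVneg n).2 = (UVpos (n + 1)).1 := by
  induction n with
  | zero =>
    change -RatFunc.X / 6 = backlundStep rfDerivation RatFunc.X 1
    rw [backlundStep, Derivation.map_one_eq_zero, Derivation.map_zero]
    ring
  | succ n ih =>
    change _ = backlundStep rfDerivation RatFunc.X (UVpos (n + 1)).1
    rw [UVneg, ← ih, backlundStep]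
    simp only [rfDerivation_apply]
    ring

theorem 𝒰_natCast (n : ℕ) : 𝒰 n = (UVpos n).1 := by
  simp [𝒰]

theorem 𝒰_neg_natCast (n : ℕ) : 𝒰 (-n) = (UVpos n).1⁻¹ := by
  cases n with
  | zero => simp [𝒰, UVpos]
  | succ n =>
    rw [𝒰, if_neg (by omega), show (-(-((n + 1 : ℕ) : ℤ))).toNat = n + 1 by omega, UVneg,
      UVneg_snd, one_div]

theorem 𝒱_natCast_add_one (n : ℕ) : 𝒱 (n + 1) = (UVpos n).1⁻¹ := by
  rw [𝒱, if_pos (by omega), show ((n : ℤ) + 1).toNat = n + 1 by omega, UVpos]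
  exact one_div _

theorem 𝒱_neg_natCast (n : ℕ) : 𝒱 (-n) = (UVpos (n + 1)).1 := by
  rw [← UVneg_snd]
  cases n with
  | zero => rfl
  | succ n => rw [𝒱, if_neg (by omega), show (-(-((n + 1 : ℕ) : ℤ))).toNat = n + 1 by omega]

theorem 𝒱_eq_inv_𝒰_sub_one (m : ℤ) : 𝒱 m = (𝒰 (m - 1))⁻¹ := by
  rcases le_or_gt m 0 with hm | hm
  · obtain ⟨n, rfl⟩ : ∃ n : ℕ, m = -n := ⟨(-m).toNat, by omega⟩
    rw [𝒱_neg_natCast, show -(n : ℤ) - 1 = -((n + 1 : ℕ) : ℤ) by push_cast; ring,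
      𝒰_neg_natCast, inv_inv]
  · obtain ⟨n, rfl⟩ : ∃ n : ℕ, m = n + 1 := ⟨(m - 1).toNat, by omega⟩
    rw [𝒱_natCast_add_one, add_sub_cancel_right, 𝒰_natCast]

theorem isPainleveII_Pm (m : ℤ) : IsPainleveII rfDerivation RatFunc.X m (Pm m) := by
  have hPm : Pm m = rfDerivation (𝒰 m) / 𝒰 m := rfl
  obtain ⟨n, rfl | rfl⟩ := Int.eq_nat_or_neg m
  · rw [hPm, 𝒰_natCast, UVpos_fst, Int.cast_natCast]
    exact (iterate_backlundStep_ne_zero_and_isPainleveII rfDerivation_X n).2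
  · rw [hPm, 𝒰_neg_natCast, Derivation.map_inv_div_inv, UVpos_fst, Int.cast_neg,
      Int.cast_natCast]
    exact (iterate_backlundStep_ne_zero_and_isPainleveII rfDerivation_X n).2.neg

theorem Qm_eq_neg_Pm_sub_one (m : ℤ) : Qm m = -Pm (m - 1) := by
  rw [Qm, Pm, 𝒱_eq_inv_𝒰_sub_one, ← rfDerivation_apply, ← rfDerivation_apply,
    Derivation.map_inv_div_inv]

/-- For every integer `m`, `𝒫_m = 𝒰_m'/𝒰_m` satisfies the inhomogeneous Painlevé-II equation
`𝒫_m'' = 2𝒫_m³ + (2/3)y𝒫_m − (2/3)m` with parameter `m`, and `𝒬_m = 𝒱_m'/𝒱_m` satisfies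
`𝒬_m'' = 2𝒬_m³ + (2/3)y𝒬_m + (2/3)(m−1)`, as identities in `ℂ(y)`. -/
theorem rational_PII (m : ℤ) :
    rfD (rfD (Pm m)) =
      2 * Pm m ^ 3 + (2 / 3 : RatFunc ℂ) * RatFunc.X * Pm m -
        (2 / 3 : RatFunc ℂ) * (m : RatFunc ℂ) ∧
    rfD (rfD (Qm m)) =
      2 * Qm m ^ 3 + (2 / 3 : RatFunc ℂ) * RatFunc.X * Qm m +
        (2 / 3 : RatFunc ℂ) * ((m : RatFunc ℂ) - 1) := by
  refine ⟨isPainleveII_Pm m, ?_⟩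
  have hQ := (isPainleveII_Pm (m - 1)).neg
  rw [← Qm_eq_neg_Pm_sub_one] at hQ
  simp only [IsPainleveII, rfDerivation_apply, Int.cast_sub, Int.cast_one] at hQ
  linear_combination hQ
end

section
/- The rational Painlevé-II functions have the following rotational symmetry under y ↦ e^{−2πi/3}y: for every integer m and every y ∈ ℂ at which the relevant rational function has no pole, 𝒰_m(e^{−2πi/3}·y) = e^{−2mπi/3}·𝒰_m(y), 𝒱_m(e^{−2πi/3}·y) = e^{2(m−1)πi/3}·𝒱_m(y), 𝒫_m(e^{−2πi/3}·y) = e^{2πi/3}·𝒫_m(y), and 𝒬_m(e^{−2πi/3}·y) = e^{2πi/3}·𝒬_m(y). -/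
/-- Evaluation of a complex rational function at a point of `ℂ` (junk value `0/0 = 0` at
poles); a point `y` is a pole of `f` iff the lowest-terms denominator `f.denom`
vanishes at `y`. -/
noncomputable def rfEval (y : ℂ) (f : RatFunc ℂ) : ℂ := RatFunc.eval (RingHom.id ℂ) y f

/-! The substitution `y ↦ c y` (`c ≠ 0`) is a field automorphism `σ_c` of `ℂ(y)`, and the chain
rule reads `(σ_c f)' = c · σ_c (f')`. Hence if `f` is an eigenvector, `σ_c f = a f`, then so are
`f'` (eigenvalue `a / c`), `1 / f` (`a⁻¹`) and `f' / f` (`c⁻¹`), and for `c³ = 1` so is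
`f''/2 − f'²/f − y f/6` (eigenvalue `c a`). Both recursions are built from these operations, so
by induction `σ_ω 𝒰_m = ω^m 𝒰_m` and `σ_ω 𝒱_m = ω^(1-m) 𝒱_m` for `ω = e^{-2πi/3}`. The identities
descend to values because `(σ_c f)(y) = f(c y)` holds for the lowest-terms evaluation: `σ_c`
maps coprime numerator and denominator to coprime ones. -/

open Polynomial

namespace RatFunc

variable {K : Type*} [Field K]

/-- The substitution `f(X) ↦ f(c X)`. -/
noncomputable def rescale (c : Kˣ) : RatFunc K ≃ₐ[K] RatFunc K :=
  IsFractionRing.algEquivOfAlgEquiv <|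
    algEquivOfCompEqX (Polynomial.C (c : K) * Polynomial.X)
      (Polynomial.C ((c⁻¹ : Kˣ) : K) * Polynomial.X)
    (by rw [mul_comp, C_comp, X_comp, ← mul_assoc, ← C_mul, Units.mul_inv, C_1, one_mul])
    (by rw [mul_comp, C_comp, X_comp, ← mul_assoc, ← C_mul, Units.inv_mul, C_1, one_mul])

lemma rescale_algebraMap (c : Kˣ) (p : K[X]) :
    rescale c (algebraMap K[X] (RatFunc K) p) =
      algebraMap K[X] (RatFunc K) (p.comp (Polynomial.C (c : K) * Polynomial.X)) := by
  simp [rescale, comp_eq_aeval]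

lemma rescale_X (c : Kˣ) : rescale c (X : RatFunc K) = (c : K) • (X : RatFunc K) := by
  rw [← algebraMap_X, rescale_algebraMap, X_comp, smul_eq_C_mul, ← algebraMap_C, ← map_mul]

lemma rescale_eq_div (c : Kˣ) (f : RatFunc K) :
    rescale c f = algebraMap K[X] (RatFunc K) (f.num.comp (Polynomial.C (c : K) * Polynomial.X)) /
      algebraMap K[X] (RatFunc K) (f.denom.comp (Polynomial.C (c : K) * Polynomial.X)) := by
  conv_lhs => rw [← num_div_denom f]
  rw [map_div₀, rescale_algebraMap, rescale_algebraMap]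

lemma eval_algebraMap_div_of_isCoprime {p q : K[X]} (h : IsCoprime p q) (a : K) :
    eval (RingHom.id K) a (algebraMap K[X] (RatFunc K) p / algebraMap K[X] (RatFunc K) q) =
      p.eval a / q.eval a := by
  by_cases hq : q = 0
  · simp [hq]
  set f := algebraMap K[X] (RatFunc K) p / algebraMap K[X] (RatFunc K) q
  have hpq : f.num * q = p * f.denom := (num_mul_eq_mul_denom_iff hq).2 rfl
  obtain ⟨v, hv⟩ : q ∣ f.denom :=
    h.symm.dvd_of_dvd_mul_left ⟨f.num, by linear_combination -hpq⟩
  have hnum : f.num = p * v := mul_right_cancel₀ hq (by linear_combination hpq + p * hv)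
  have hv_unit : IsUnit v := by
    refine isUnit_of_dvd_one ((mul_dvd_mul_iff_left hq).1 ?_)
    rw [← hv, mul_one]
    exact denom_div_dvd p q
  have hv0 : v.eval a ≠ 0 := (hv_unit.map (evalRingHom a)).ne_zero
  rw [eval, eval₂_id, eval₂_id, hnum, hv, Polynomial.eval_mul, Polynomial.eval_mul,
    mul_div_mul_right _ _ hv0]

lemma eval_rescale (c : Kˣ) (f : RatFunc K) (a : K) :
    eval (RingHom.id K) a (rescale c f) = eval (RingHom.id K) (c * a) f := by
  have hcop : IsCoprime (f.num.comp (Polynomial.C (c : K) * Polynomial.X))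
      (f.denom.comp (Polynomial.C (c : K) * Polynomial.X)) :=
    f.isCoprime_num_denom.map (compRingHom _)
  rw [rescale_eq_div, eval_algebraMap_div_of_isCoprime hcop]
  simp [eval, eval_comp]

lemma eval_mul_of_rescale_eq_smul {c : Kˣ} {f : RatFunc K} {a : K} (h : rescale c f = a • f)
    {y : K} (hy : f.denom.eval y ≠ 0) :
    eval (RingHom.id K) (c * y) f = a * eval (RingHom.id K) y f := by
  rw [← eval_rescale, h, smul_eq_C_mul, eval_mul _ _ (by simp) hy, eval_C, RingHom.id_apply]

end RatFunc

open RatFunc in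
lemma rfD_algebraMap_div (p q : ℂ[X]) (hq : q ≠ 0) :
    rfD (algebraMap ℂ[X] (RatFunc ℂ) p / algebraMap ℂ[X] (RatFunc ℂ) q) =
      algebraMap ℂ[X] (RatFunc ℂ) (derivative p * q - p * derivative q) /
        algebraMap ℂ[X] (RatFunc ℂ) (q ^ 2) := by
  set f := algebraMap ℂ[X] (RatFunc ℂ) p / algebraMap ℂ[X] (RatFunc ℂ) q
  have hpq : f.num * q = p * f.denom := (num_mul_eq_mul_denom_iff hq).2 rfl
  have hpq' := congrArg derivative hpq
  simp only [derivative_mul] at hpq'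
  have key : (derivative f.num * f.denom - f.num * derivative f.denom) * q ^ 2 =
      (derivative p * q - p * derivative q) * f.denom ^ 2 := by
    linear_combination (f.denom * q) * hpq' -
      (derivative f.denom * q + derivative q * f.denom) * hpq
  rw [rfD, div_eq_div_iff (pow_ne_zero 2 (algebraMap_ne_zero f.denom_ne_zero))
    (algebraMap_ne_zero (pow_ne_zero 2 hq))]
  simpa only [map_mul, map_sub, map_pow] using congrArg (algebraMap ℂ[X] (RatFunc ℂ)) key

lemma rfD_smul (a : ℂ) (f : RatFunc ℂ) : rfD (a • f) = a • rfD f := by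
  have hf : a • f = algebraMap ℂ[X] (RatFunc ℂ) (C a * f.num) /
      algebraMap ℂ[X] (RatFunc ℂ) f.denom := by
    rw [RatFunc.smul_eq_C_mul, map_mul, RatFunc.algebraMap_C, mul_div_assoc, RatFunc.num_div_denom]
  rw [hf, rfD_algebraMap_div _ _ f.denom_ne_zero, rfD, RatFunc.smul_eq_C_mul, derivative_C_mul]
  simp only [map_sub, map_mul, map_pow, RatFunc.algebraMap_C]
  ring

lemma rfD_rescale (c : ℂˣ) (f : RatFunc ℂ) :
    rfD (RatFunc.rescale c f) = (c : ℂ) • RatFunc.rescale c (rfD f) := by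
  have hd : f.denom.comp (C (c : ℂ) * X) ≠ 0 := fun h => f.denom_ne_zero <| by
    simpa [h] using RatFunc.rescale_algebraMap c f.denom
  rw [RatFunc.rescale_eq_div, rfD_algebraMap_div _ _ hd, rfD]
  simp only [map_div₀, map_sub, map_mul, map_pow, RatFunc.rescale_algebraMap,
    RatFunc.smul_eq_C_mul, derivative_comp, derivative_mul, derivative_C, derivative_X, zero_mul,
    mul_one, zero_add]
  rw [RatFunc.algebraMap_C]
  ring

noncomputable def pIIShift (f : RatFunc ℂ) : RatFunc ℂ :=
  (1 / 2 : RatFunc ℂ) * rfD (rfD f) - rfD f ^ 2 / f - (1 / 6 : RatFunc ℂ) * RatFunc.X * f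

section Eigen

variable {c : ℂˣ} {f : RatFunc ℂ} {a : ℂ}

lemma rescale_rfD_of_eq_smul (h : RatFunc.rescale c f = a • f) :
    RatFunc.rescale c (rfD f) = (a / c) • rfD f := by
  rw [← inv_smul_smul₀ c.ne_zero (RatFunc.rescale c (rfD f)), ← rfD_rescale, h, rfD_smul,
    smul_smul, div_eq_inv_mul]

lemma rescale_one_div_of_eq_smul (h : RatFunc.rescale c f = a • f) :
    RatFunc.rescale c (1 / f) = a⁻¹ • (1 / f) := by
  rw [map_div₀, map_one, h, one_div, one_div, smul_inv₀]

lemma rescale_rfD_div_self_of_eq_smul (ha : a ≠ 0) (h : RatFunc.rescale c f = a • f) :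
    RatFunc.rescale c (rfD f / f) = (c : ℂ)⁻¹ • (rfD f / f) := by
  rw [map_div₀, rescale_rfD_of_eq_smul h, h]
  simp only [RatFunc.smul_eq_C_mul]
  rw [mul_div_mul_comm, ← map_div₀, div_div_cancel_left' ha]

lemma rescale_pIIShift_of_eq_smul (hc : (c : ℂ) ^ 3 = 1) (ha : a ≠ 0)
    (h : RatFunc.rescale c f = a • f) :
    RatFunc.rescale c (pIIShift f) = ((c : ℂ) * a) • pIIShift f := by
  have hCa : RatFunc.C a ≠ 0 := by simp [ha]
  have hCc : RatFunc.C (c : ℂ) ≠ 0 := by simp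
  have hC3 : RatFunc.C (c : ℂ) ^ 3 = 1 := by rw [← map_pow, hc, map_one]
  simp only [pIIShift, map_sub, map_mul, map_div₀, map_pow, map_one, map_ofNat, RatFunc.rescale_X,
    h, rescale_rfD_of_eq_smul h, rescale_rfD_of_eq_smul (rescale_rfD_of_eq_smul h),
    RatFunc.smul_eq_C_mul]
  field_simp
  rw [hC3]
  ring

end Eigen

lemma UVpos_succ (n : ℕ) : UVpos (n + 1) = (pIIShift (UVpos n).1, 1 / (UVpos n).1) := by
  rw [UVpos, pIIShift]
  congr 1
  ring

lemma UVneg_succ (n : ℕ) : UVneg (n + 1) = (1 / (UVneg n).2, pIIShift (UVneg n).2) := rfl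

lemma rescale_neg_X_div_six (c : ℂˣ) :
    RatFunc.rescale c (-RatFunc.X / 6) = (c : ℂ) • (-RatFunc.X / 6) := by
  rw [map_div₀, map_neg, RatFunc.rescale_X, map_ofNat, ← smul_neg, smul_div_assoc]

section Rotation

variable {c : ℂˣ}

lemma rescale_UVpos (hc : (c : ℂ) ^ 3 = 1) (n : ℕ) :
    RatFunc.rescale c (UVpos n).1 = (c : ℂ) ^ (n : ℤ) • (UVpos n).1 ∧
      RatFunc.rescale c (UVpos n).2 = (c : ℂ) ^ (1 - n : ℤ) • (UVpos n).2 := by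
  induction n with
  | zero =>
    refine ⟨by simp [UVpos], ?_⟩
    rw [Nat.cast_zero, sub_zero, zpow_one]
    exact rescale_neg_X_div_six c
  | succ n ih =>
    rw [UVpos_succ]
    refine ⟨?_, ?_⟩
    · rw [rescale_pIIShift_of_eq_smul hc (zpow_ne_zero _ c.ne_zero) ih.1, Nat.cast_succ,
        zpow_add_one₀ c.ne_zero, mul_comm]
    · rw [rescale_one_div_of_eq_smul ih.1, ← zpow_neg]
      congr 2
      push_cast
      ring

lemma rescale_UVneg (hc : (c : ℂ) ^ 3 = 1) (n : ℕ) :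
    RatFunc.rescale c (UVneg n).1 = (c : ℂ) ^ (-n : ℤ) • (UVneg n).1 ∧
      RatFunc.rescale c (UVneg n).2 = (c : ℂ) ^ (1 + n : ℤ) • (UVneg n).2 := by
  induction n with
  | zero =>
    refine ⟨by simp [UVneg], ?_⟩
    rw [Nat.cast_zero, add_zero, zpow_one]
    exact rescale_neg_X_div_six c
  | succ n ih =>
    rw [UVneg_succ]
    refine ⟨?_, ?_⟩
    · rw [rescale_one_div_of_eq_smul ih.2, ← zpow_neg]
      congr 2
      push_cast
      ring
    · rw [rescale_pIIShift_of_eq_smul hc (zpow_ne_zero _ c.ne_zero) ih.2, Nat.cast_succ,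
        ← add_assoc, zpow_add_one₀ c.ne_zero, mul_comm]

lemma rescale_𝒰 (hc : (c : ℂ) ^ 3 = 1) (m : ℤ) :
    RatFunc.rescale c (𝒰 m) = (c : ℂ) ^ m • 𝒰 m := by
  rw [𝒰]
  split_ifs with hm
  · simpa only [Int.toNat_of_nonneg hm] using (rescale_UVpos hc m.toNat).1
  · simpa only [Int.toNat_of_nonneg (Int.neg_nonneg_of_nonpos (le_of_not_ge hm)), neg_neg]
      using (rescale_UVneg hc (-m).toNat).1

lemma rescale_𝒱 (hc : (c : ℂ) ^ 3 = 1) (m : ℤ) :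
    RatFunc.rescale c (𝒱 m) = (c : ℂ) ^ (1 - m) • 𝒱 m := by
  rw [𝒱]
  split_ifs with hm
  · simpa only [Int.toNat_of_nonneg hm] using (rescale_UVpos hc m.toNat).2
  · simpa only [Int.toNat_of_nonneg (Int.neg_nonneg_of_nonpos (le_of_not_ge hm)),
      ← sub_eq_add_neg] using (rescale_UVneg hc (-m).toNat).2

end Rotation

/-- Rotational symmetry of the rational Painlevé-II functions under `y ↦ e^{−2πi/3}y`:
for every integer `m` and every `y ∈ ℂ` at which the relevant rational function has no pole,
`𝒰_m(e^{−2πi/3}y) = e^{−2mπi/3}𝒰_m(y)`, `𝒱_m(e^{−2πi/3}y) = e^{2(m−1)πi/3}𝒱_m(y)`,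
`𝒫_m(e^{−2πi/3}y) = e^{2πi/3}𝒫_m(y)`, and `𝒬_m(e^{−2πi/3}y) = e^{2πi/3}𝒬_m(y)`. -/
theorem rational_PII_rotation (m : ℤ) (y : ℂ) :
    (Polynomial.eval y (𝒰 m).denom ≠ 0 →
      rfEval (Complex.exp (-(2 * Real.pi * Complex.I) / 3) * y) (𝒰 m) =
        Complex.exp (-(2 * (m : ℂ) * Real.pi * Complex.I) / 3) * rfEval y (𝒰 m)) ∧
    (Polynomial.eval y (𝒱 m).denom ≠ 0 →
      rfEval (Complex.exp (-(2 * Real.pi * Complex.I) / 3) * y) (𝒱 m) =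
        Complex.exp (2 * ((m : ℂ) - 1) * Real.pi * Complex.I / 3) * rfEval y (𝒱 m)) ∧
    (Polynomial.eval y (rfD (𝒰 m) / 𝒰 m).denom ≠ 0 →
      rfEval (Complex.exp (-(2 * Real.pi * Complex.I) / 3) * y) (rfD (𝒰 m) / 𝒰 m) =
        Complex.exp (2 * Real.pi * Complex.I / 3) * rfEval y (rfD (𝒰 m) / 𝒰 m)) ∧
    (Polynomial.eval y (rfD (𝒱 m) / 𝒱 m).denom ≠ 0 →
      rfEval (Complex.exp (-(2 * Real.pi * Complex.I) / 3) * y) (rfD (𝒱 m) / 𝒱 m) =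
        Complex.exp (2 * Real.pi * Complex.I / 3) * rfEval y (rfD (𝒱 m) / 𝒱 m)) := by
  obtain ⟨ω, hω⟩ : ∃ ω : ℂˣ, (ω : ℂ) = Complex.exp (-(2 * Real.pi * Complex.I) / 3) :=
    ⟨Units.mk0 _ (Complex.exp_ne_zero _), rfl⟩
  have hpow (k : ℤ) : (ω : ℂ) ^ k = Complex.exp (k * (-(2 * Real.pi * Complex.I) / 3)) := by
    rw [hω, ← Complex.exp_int_mul]
  have hω3 : (ω : ℂ) ^ 3 = 1 := by
    rw [← zpow_natCast, hpow, ← Complex.exp_int_mul_two_pi_mul_I (-1)]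
    congr 1
    push_cast
    ring
  have hU : Complex.exp (-(2 * (m : ℂ) * Real.pi * Complex.I) / 3) = (ω : ℂ) ^ m := by
    rw [hpow]; congr 1; ring
  have hV : Complex.exp (2 * ((m : ℂ) - 1) * Real.pi * Complex.I / 3) = (ω : ℂ) ^ (1 - m) := by
    rw [hpow]; congr 1; push_cast; ring
  have hlog : Complex.exp (2 * Real.pi * Complex.I / 3) = (ω : ℂ)⁻¹ := by
    rw [← zpow_neg_one, hpow]; congr 1; push_cast; ring
  rw [← hω, hU, hV, hlog]
  have hωm (k : ℤ) : (ω : ℂ) ^ k ≠ 0 := zpow_ne_zero _ ω.ne_zero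
  exact ⟨RatFunc.eval_mul_of_rescale_eq_smul (rescale_𝒰 hω3 m),
    RatFunc.eval_mul_of_rescale_eq_smul (rescale_𝒱 hω3 m),
    RatFunc.eval_mul_of_rescale_eq_smul
      (rescale_rfD_div_self_of_eq_smul (hωm _) (rescale_𝒰 hω3 m)),
    RatFunc.eval_mul_of_rescale_eq_smul
      (rescale_rfD_div_self_of_eq_smul (hωm _) (rescale_𝒱 hω3 m))⟩
end
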